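/- Upper bound for approximation numbers by projecting out columns: for 0 < q ≤ p ≤ ∞ and 1 ≤ n ≤ N², a_n(S_p^N ↪ S_q^N) ≤ ⌈(N² − n + 1)/N⌉^{1/q − 1/p}. In particular a_n(S_p^N ↪ S_q^N) ≲_{p,q} max{1, (N² − n + 1)/N}^{1/q − 1/p}. -/

import Mathlib

/-!
The approximant keeps the first `k = ⌊(n - 1) / N⌋` columns, `T A = A * diag(1_{j < k})`: its
range has dimension at most `N k < n`, and `A - T A = A * D` is `A` with those columns deleted.
Right multiplication by a contraction lowers every (sorted) singular value, by a Courant–Fischer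
dimension count, so `‖A D‖_{S_p} ≤ ‖A‖_{S_p}`. As `A D` has rank at most `N - k`, Hölder's
inequality on its nonzero singular values gives `‖A D‖_{S_q} ≤ (N - k)^(1/q - 1/p) ‖A D‖_{S_p}`.
Finally `N - k = ⌈(N² - n + 1) / N⌉ ≤ 2 max {1, (N² - n + 1) / N}`.
-/

open scoped ENNReal

/-- The (unordered) singular values of a real `N × N` matrix `A`:
the square roots of the eigenvalues of `Aᵀ * A`. -/
noncomputable def singularValues (N : ℕ) (A : Matrix (Fin N) (Fin N) ℝ) : Fin N → ℝ :=
  fun i => Real.sqrt ((show (Matrix.transpose A * A).IsHermitian by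
    simpa only [Matrix.conjTranspose_eq_transpose_of_trivial] using
      Matrix.isHermitian_conjTranspose_mul_self A).eigenvalues i)

/-- The Schatten `p`-(quasi-)norm of a real `N × N` matrix, `0 < p ≤ ∞`. -/
noncomputable def schattenNorm (N : ℕ) (p : ℝ≥0∞) (A : Matrix (Fin N) (Fin N) ℝ) : ℝ :=
  if p = ⊤ then ⨆ i, singularValues N A i
  else (∑ i, singularValues N A i ^ p.toReal) ^ (1 / p.toReal)

/-- The `n`-th approximation number of the natural identity `S_p^N → S_q^N`. -/
noncomputable def approxNumber (N : ℕ) (p q : ℝ≥0∞) (n : ℕ) : ℝ :=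
  sInf {r : ℝ | ∃ T : Matrix (Fin N) (Fin N) ℝ →ₗ[ℝ] Matrix (Fin N) (Fin N) ℝ,
    Module.finrank ℝ (LinearMap.range T) < n ∧
    r = sSup {s : ℝ | ∃ A, schattenNorm N p A ≤ 1 ∧ s = schattenNorm N q (A - T A)}}

/-- The `n`-th Gelfand number of the natural identity `S_p^N → S_q^N`. -/
noncomputable def gelfandNumber (N : ℕ) (p q : ℝ≥0∞) (n : ℕ) : ℝ :=
  sInf {r : ℝ | ∃ F : Submodule ℝ (Matrix (Fin N) (Fin N) ℝ),
    N ^ 2 - Module.finrank ℝ F < n ∧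
    r = sSup {s : ℝ | ∃ A ∈ F, schattenNorm N p A ≤ 1 ∧ s = schattenNorm N q A}}

/-- The `n`-th Kolmogorov number of the natural identity `S_p^N → S_q^N`. -/
noncomputable def kolmogorovNumber (N : ℕ) (p q : ℝ≥0∞) (n : ℕ) : ℝ :=
  sInf {r : ℝ | ∃ E : Submodule ℝ (Matrix (Fin N) (Fin N) ℝ),
    Module.finrank ℝ E < n ∧
    r = sSup {s : ℝ | ∃ A, schattenNorm N p A ≤ 1 ∧
      s = sInf {t : ℝ | ∃ B ∈ E, t = schattenNorm N q (A - B)}}}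

open scoped RealInnerProductSpace
open Module Finset Matrix

theorem Real.sum_rpow_rpow_le_card_rpow_mul {ι : Type*} (s : Finset ι) {f : ι → ℝ}
    (hf : ∀ i ∈ s, 0 ≤ f i) {p q : ℝ} (hq : 0 < q) (hqp : q ≤ p) :
    (∑ i ∈ s, f i ^ q) ^ (1 / q) ≤ (#s : ℝ) ^ (1 / q - 1 / p) * (∑ i ∈ s, f i ^ p) ^ (1 / p) := by
  have hp : 0 < p := hq.trans_le hqp
  have hsum : 0 ≤ ∑ i ∈ s, f i ^ q := sum_nonneg fun i hi => rpow_nonneg (hf i hi) q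
  have key := rpow_sum_le_const_mul_sum_rpow_of_nonneg (s := s) (f := fun i => f i ^ q)
    ((one_le_div hq).2 hqp) fun i hi => rpow_nonneg (hf i hi) q
  have hpow : ∀ i ∈ s, (f i ^ q) ^ (p / q) = f i ^ p := fun i hi => by
    rw [← rpow_mul (hf i hi), mul_div_cancel₀ _ hq.ne']
  rw [sum_congr rfl hpow] at key
  have := rpow_le_rpow (rpow_nonneg hsum _) key (one_div_nonneg.2 hp.le)
  rw [← rpow_mul hsum, mul_rpow (by positivity) (sum_nonneg fun i hi => rpow_nonneg (hf i hi) p),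
    ← rpow_mul (Nat.cast_nonneg _)] at this
  convert this using 3 <;> field_simp

theorem ENNReal.one_div_toReal_le_one_div_toReal {p q : ℝ≥0∞} (hq : 0 < q) (hqp : q ≤ p) :
    1 / p.toReal ≤ 1 / q.toReal := by
  by_cases hpt : p = ⊤
  · simp [hpt]
  exact one_div_le_one_div_of_le (toReal_pos hq.ne' (ne_top_of_le_ne_top hpt hqp))
    (toReal_mono hpt hqp)

theorem Finset.sum_rpow_eq_sum_filter_ne_zero {ι : Type*} (s : Finset ι) (f : ι → ℝ) {r : ℝ}
    (hr : r ≠ 0) : ∑ i ∈ s, f i ^ r = ∑ i ∈ s with f i ≠ 0, f i ^ r :=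
  (sum_filter_of_ne (p := fun i => f i ≠ 0) fun i _ h hi => h (by rw [hi, Real.zero_rpow hr])).symm

section lpQuasinorm

variable {ι : Type*} [Fintype ι]

-- Only applied to nonnegative vectors, hence no absolute values: `schattenNorm N p A` unfolds to
-- `lpQuasinorm p (singularValues N A)`.
noncomputable def lpQuasinorm (p : ℝ≥0∞) (s : ι → ℝ) : ℝ :=
  if p = ⊤ then ⨆ i, s i else (∑ i, s i ^ p.toReal) ^ (1 / p.toReal)

theorem lpQuasinorm_nonneg (p : ℝ≥0∞) {s : ι → ℝ} (hs : 0 ≤ s) : 0 ≤ lpQuasinorm p s := by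
  unfold lpQuasinorm
  split_ifs
  · exact Real.iSup_nonneg hs
  · exact Real.rpow_nonneg (sum_nonneg fun i _ => Real.rpow_nonneg (hs i) _) _

theorem lpQuasinorm_comp_equiv {κ : Type*} [Fintype κ] (p : ℝ≥0∞) (s : ι → ℝ) (e : κ ≃ ι) :
    lpQuasinorm p (s ∘ e) = lpQuasinorm p s := by
  unfold lpQuasinorm
  split_ifs
  · exact e.iSup_comp (g := s)
  · rw [Function.comp_def, e.sum_comp (fun i => s i ^ p.toReal)]

theorem lpQuasinorm_mono (p : ℝ≥0∞) {s t : ι → ℝ} (hs : 0 ≤ s) (hst : s ≤ t) :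
    lpQuasinorm p s ≤ lpQuasinorm p t := by
  unfold lpQuasinorm
  split_ifs
  · exact ciSup_mono (Set.finite_range t).bddAbove hst
  · gcongr with i
    · exact sum_nonneg fun i _ => Real.rpow_nonneg (hs i) _
    · exact hs i
    · exact hst i

theorem lpQuasinorm_le_card_rpow_mul {p q : ℝ≥0∞} (hq : 0 < q) (hqp : q ≤ p) {s : ι → ℝ}
    (hs : 0 ≤ s) {m : ℕ} (hm : #{i | s i ≠ 0} ≤ m) :
    lpQuasinorm q s ≤ (m : ℝ) ^ (1 / q.toReal - 1 / p.toReal) * lpQuasinorm p s := by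
  have he : 0 ≤ 1 / q.toReal - 1 / p.toReal :=
    sub_nonneg.2 (ENNReal.one_div_toReal_le_one_div_toReal hq hqp)
  suffices h : lpQuasinorm q s
      ≤ (#{i | s i ≠ 0} : ℝ) ^ (1 / q.toReal - 1 / p.toReal) * lpQuasinorm p s by
    refine h.trans ?_
    gcongr
    exact lpQuasinorm_nonneg p hs
  by_cases hqt : q = ⊤
  · obtain rfl : p = ⊤ := top_le_iff.1 (hqt ▸ hqp)
    simp [hqt]
  have hq0 : 0 < q.toReal := ENNReal.toReal_pos hq.ne' hqt
  rw [lpQuasinorm, if_neg hqt, sum_rpow_eq_sum_filter_ne_zero _ _ hq0.ne']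
  by_cases hpt : p = ⊤
  · rw [lpQuasinorm, if_pos hpt, hpt, ENNReal.toReal_top, div_zero, sub_zero]
    have hM : 0 ≤ ⨆ j, s j := Real.iSup_nonneg hs
    calc (∑ i ∈ univ with s i ≠ 0, s i ^ q.toReal) ^ (1 / q.toReal)
        ≤ (∑ i ∈ univ with s i ≠ 0, (⨆ j, s j) ^ q.toReal) ^ (1 / q.toReal) := by
          gcongr with i
          · exact sum_nonneg fun i _ => Real.rpow_nonneg (hs i) _
          · exact hs i
          · exact le_ciSup (Set.finite_range s).bddAbove i
      _ = (#{i | s i ≠ 0} : ℝ) ^ (1 / q.toReal) * ⨆ j, s j := by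
          rw [sum_const, nsmul_eq_mul, Real.mul_rpow (Nat.cast_nonneg _) (Real.rpow_nonneg hM _),
            ← Real.rpow_mul hM, mul_one_div_cancel hq0.ne', Real.rpow_one]
  · rw [lpQuasinorm, if_neg hpt, sum_rpow_eq_sum_filter_ne_zero _ _ (ENNReal.toReal_pos
      (hq.trans_le hqp).ne' hpt).ne']
    exact Real.sum_rpow_rpow_le_card_rpow_mul _ (fun i _ => hs i) hq0 (ENNReal.toReal_mono hpt hqp)

end lpQuasinorm

theorem Module.Basis.exists_ne_zero_repr_eq_zero {K E F : Type*} [Field K] [AddCommGroup E]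
    [Module K E] [AddCommGroup F] [Module K F] {n : ℕ} (u : Basis (Fin n) K E)
    (v : Basis (Fin n) K F) (C : E →ₗ[K] F) (i : Fin n) :
    ∃ x ≠ 0, (∀ j, i < j → u.repr x j = 0) ∧ ∀ j, j < i → v.repr (C x) j = 0 := by
  have := u.finiteDimensional_of_finite
  let f : E →ₗ[K] (Ioi i → K) × (Iio i → K) :=
    (LinearMap.pi fun j : Ioi i => u.coord j).prod (LinearMap.pi fun j : Iio i => v.coord j ∘ₗ C)
  have hdim : finrank K ((Ioi i → K) × (Iio i → K)) < finrank K E := by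
    rw [finrank_prod, finrank_fintype_fun_eq_card, finrank_fintype_fun_eq_card, Fintype.card_coe,
      Fintype.card_coe, Fin.card_Ioi, Fin.card_Iio, finrank_eq_card_basis u, Fintype.card_fin]
    omega
  obtain ⟨x, hx, hx0⟩ :=
    Submodule.exists_mem_ne_zero_of_ne_bot (LinearMap.ker_ne_bot_of_finrank_lt (f := f) hdim)
  rw [LinearMap.mem_ker, LinearMap.prod_apply, Prod.mk_eq_zero] at hx
  exact ⟨x, hx0, fun j hj => congrFun hx.1 ⟨j, mem_Ioi.2 hj⟩,
    fun j hj => congrFun hx.2 ⟨j, mem_Iio.2 hj⟩⟩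

theorem OrthonormalBasis.norm_sq_eq_sum_repr_sq {ι E : Type*} [Fintype ι] [NormedAddCommGroup E]
    [InnerProductSpace ℝ E] (b : OrthonormalBasis ι ℝ E) (x : E) :
    ‖x‖ ^ 2 = ∑ j, b.repr x j ^ 2 := by
  rw [← b.repr.norm_map, EuclideanSpace.norm_sq_eq]
  simp

namespace LinearMap.IsSymmetric

variable {E : Type*} [NormedAddCommGroup E] [InnerProductSpace ℝ E] [FiniteDimensional ℝ E]
  {n : ℕ} {T : E →ₗ[ℝ] E} (hT : T.IsSymmetric) (hn : finrank ℝ E = n)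

theorem inner_apply_self_eq_sum (x : E) :
    ⟪T x, x⟫ = ∑ j, hT.eigenvalues hn j * (hT.eigenvectorBasis hn).repr x j ^ 2 := by
  rw [← (hT.eigenvectorBasis hn).repr.inner_map_map, PiLp.inner_apply]
  refine sum_congr rfl fun j _ => ?_
  simp only [eigenvectorBasis_apply_self_apply, RCLike.inner_apply, conj_trivial,
    RCLike.ofReal_real_eq_id, id_eq]
  ring

theorem eigenvalues_mul_norm_sq_le_inner {i : Fin n} {x : E}
    (hx : ∀ j, i < j → (hT.eigenvectorBasis hn).repr x j = 0) :
    hT.eigenvalues hn i * ‖x‖ ^ 2 ≤ ⟪T x, x⟫ := by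
  rw [hT.inner_apply_self_eq_sum hn, (hT.eigenvectorBasis hn).norm_sq_eq_sum_repr_sq, mul_sum]
  refine sum_le_sum fun j _ => ?_
  rcases le_or_gt j i with hji | hij
  · exact mul_le_mul_of_nonneg_right (hT.eigenvalues_antitone hn hji) (sq_nonneg _)
  · simp [hx j hij]

theorem inner_le_eigenvalues_mul_norm_sq {i : Fin n} {x : E}
    (hx : ∀ j, j < i → (hT.eigenvectorBasis hn).repr x j = 0) :
    ⟪T x, x⟫ ≤ hT.eigenvalues hn i * ‖x‖ ^ 2 := by
  rw [hT.inner_apply_self_eq_sum hn, (hT.eigenvectorBasis hn).norm_sq_eq_sum_repr_sq, mul_sum]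
  refine sum_le_sum fun j _ => ?_
  rcases le_or_gt i j with hij | hji
  · exact mul_le_mul_of_nonneg_right (hT.eigenvalues_antitone hn hij) (sq_nonneg _)
  · simp [hx j hji]

theorem eigenvalues_le_of_inner_le {S : E →ₗ[ℝ] E} (hS : S.IsSymmetric) (hTpos : T.IsPositive)
    (C : E →ₗ[ℝ] E) (hC : ∀ x, ‖C x‖ ≤ ‖x‖) (h : ∀ x, ⟪S x, x⟫ ≤ ⟪T (C x), C x⟫) (i : Fin n) :
    hS.eigenvalues hn i ≤ hTpos.isSymmetric.eigenvalues hn i := by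
  obtain ⟨x, hx0, hxS, hxT⟩ := ((hS.eigenvectorBasis hn).toBasis.exists_ne_zero_repr_eq_zero
    (hTpos.isSymmetric.eigenvectorBasis hn).toBasis C i)
  simp only [OrthonormalBasis.coe_toBasis_repr_apply] at hxS hxT
  refine le_of_mul_le_mul_right ?_ (pow_pos (norm_pos_iff.2 hx0) 2)
  calc hS.eigenvalues hn i * ‖x‖ ^ 2 ≤ ⟪S x, x⟫ := hS.eigenvalues_mul_norm_sq_le_inner hn hxS
    _ ≤ ⟪T (C x), C x⟫ := h x
    _ ≤ hTpos.isSymmetric.eigenvalues hn i * ‖C x‖ ^ 2 :=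
      hTpos.isSymmetric.inner_le_eigenvalues_mul_norm_sq hn hxT
    _ ≤ hTpos.isSymmetric.eigenvalues hn i * ‖x‖ ^ 2 := by
      gcongr
      · exact hTpos.nonneg_eigenvalues hn i
      · exact hC x

end LinearMap.IsSymmetric

theorem LinearMap.IsSymmetric.eigenvalues_congr {E : Type*} [NormedAddCommGroup E]
    [InnerProductSpace ℝ E] [FiniteDimensional ℝ E] {n : ℕ} {S T : E →ₗ[ℝ] E}
    (hS : S.IsSymmetric) (hT : T.IsSymmetric) (hn : finrank ℝ E = n) (h : S = T) :
    hS.eigenvalues hn = hT.eigenvalues hn := by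
  subst h; rfl

theorem LinearMap.singularValues_comp_le {E F : Type*} [NormedAddCommGroup E]
    [InnerProductSpace ℝ E] [FiniteDimensional ℝ E] [NormedAddCommGroup F] [InnerProductSpace ℝ F]
    [FiniteDimensional ℝ F]
    (T : E →ₗ[ℝ] F) (C : E →ₗ[ℝ] E) (hC : ∀ x, ‖C x‖ ≤ ‖x‖) (i : ℕ) :
    (T ∘ₗ C).singularValues i ≤ T.singularValues i := by
  rcases lt_or_ge i (finrank ℝ E) with hi | hi
  · rw [singularValues_of_lt _ rfl hi, singularValues_of_lt _ rfl hi]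
    refine Real.sqrt_le_sqrt (isSymmetric_adjoint_comp_self _ |>.eigenvalues_le_of_inner_le rfl
      (isPositive_adjoint_comp_self T) C hC (fun x => le_of_eq ?_) _)
    simp [adjoint_inner_left]
  · rw [singularValues_of_finrank_le _ hi]
    exact singularValues_nonneg T i

theorem Matrix.norm_toEuclideanLin_diagonal_apply_le {n : Type*} [Fintype n] [DecidableEq n]
    {d : n → ℝ} (hd : ∀ j, |d j| ≤ 1) (x : EuclideanSpace ℝ n) :
    ‖toEuclideanLin (diagonal d) x‖ ≤ ‖x‖ := by
  rw [EuclideanSpace.norm_eq, EuclideanSpace.norm_eq]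
  gcongr with j
  simp [toLpLin_apply, mulVec_diagonal]
  exact mul_le_of_le_one_left (abs_nonneg _) (hd j)

theorem Matrix.finrank_range_mulRightLinearMap_mul_le {l m o K : Type*} [Fintype l] [Fintype m]
    [Fintype o] [Field K] (a : Matrix m o K) (b : Matrix o m K) :
    finrank K (LinearMap.range (mulRightLinearMap l K (a * b)))
      ≤ Fintype.card l * Fintype.card o := by
  rw [mulRightLinearMap_mul]
  calc _ ≤ finrank K (LinearMap.range (mulRightLinearMap l K b)) :=
        Submodule.finrank_mono (LinearMap.range_comp_le_range _ _)
    _ ≤ finrank K (Matrix l o K) := LinearMap.finrank_range_le _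
    _ = _ := by rw [finrank_matrix, finrank_self, mul_one]

theorem Matrix.finrank_range_mulRightLinearMap_diagonal_le {l n K : Type*} [Fintype l]
    [Fintype n] [DecidableEq n] [Field K] (S : Finset n) :
    finrank K (LinearMap.range
      (mulRightLinearMap l K (diagonal fun j => if j ∈ S then (1 : K) else 0)))
      ≤ Fintype.card l * #S := by
  have hfactor : (1 : Matrix n n K).submatrix id ((↑) : S → n)
      * (1 : Matrix n n K).submatrix ((↑) : S → n) id
      = diagonal fun j => if j ∈ S then 1 else 0 := by
    ext i j
    simp only [Matrix.mul_apply, submatrix_apply, id_eq, one_apply, diagonal_apply, mul_ite,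
      mul_one, mul_zero]
    rw [Finset.sum_coe_sort S (fun s => if s = j then if i = s then (1 : K) else 0 else 0)]
    by_cases hij : i = j <;> simp [hij]
  rw [← hfactor]
  exact (finrank_range_mulRightLinearMap_mul_le _ _).trans_eq (by rw [Fintype.card_coe])

section Schatten

variable {N : ℕ}

theorem singularValues_eq_singularValues_toEuclideanLin (A : Matrix (Fin N) (Fin N) ℝ) :
    ∃ e : Fin N ≃ Fin N, ∀ i, singularValues N A i = (toEuclideanLin A).singularValues (e i) := by
  let e : Fin (Fintype.card (Fin N)) ≃ Fin N := Fintype.equivOfCardEq (Fintype.card_fin _)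
  refine ⟨e.symm.trans (finCongr (Fintype.card_fin N)), fun i => ?_⟩
  have h := (toEuclideanLin A).singularValues_fin finrank_euclideanSpace (e.symm i)
  have hAA :
      LinearMap.adjoint (toEuclideanLin A) ∘ₗ toEuclideanLin A = toEuclideanLin (Aᵀ * A) := by
    rw [← toEuclideanLin_conjTranspose_eq_adjoint, ← toLpLin_mul_same,
      conjTranspose_eq_transpose_of_trivial]
  rw [LinearMap.IsSymmetric.eigenvalues_congr _
    (hAA ▸ LinearMap.isSymmetric_adjoint_comp_self _) _ hAA] at h
  exact h.symm

theorem schattenNorm_eq_lpQuasinorm (p : ℝ≥0∞) (A : Matrix (Fin N) (Fin N) ℝ) :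
    schattenNorm N p A = lpQuasinorm p fun i : Fin N => (toEuclideanLin A).singularValues i := by
  obtain ⟨e, he⟩ := singularValues_eq_singularValues_toEuclideanLin A
  have hcomp : singularValues N A = (fun i : Fin N => (toEuclideanLin A).singularValues i) ∘ e :=
    funext he
  rw [← lpQuasinorm_comp_equiv p _ e, ← hcomp]
  rfl

theorem schattenNorm_nonneg (p : ℝ≥0∞) (A : Matrix (Fin N) (Fin N) ℝ) :
    0 ≤ schattenNorm N p A :=
  schattenNorm_eq_lpQuasinorm p A ▸
    lpQuasinorm_nonneg p fun _ => LinearMap.singularValues_nonneg _ _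

theorem schattenNorm_mul_le (p : ℝ≥0∞) (A C : Matrix (Fin N) (Fin N) ℝ)
    (hC : ∀ x, ‖toEuclideanLin C x‖ ≤ ‖x‖) : schattenNorm N p (A * C) ≤ schattenNorm N p A := by
  rw [schattenNorm_eq_lpQuasinorm, schattenNorm_eq_lpQuasinorm, toLpLin_mul_same]
  exact lpQuasinorm_mono p (fun _ => LinearMap.singularValues_nonneg _ _)
    fun i => LinearMap.singularValues_comp_le _ _ hC i

theorem schattenNorm_le_rpow_mul_of_rank_le {p q : ℝ≥0∞} (hq : 0 < q) (hqp : q ≤ p)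
    {B : Matrix (Fin N) (Fin N) ℝ} {m : ℕ} (hm : B.rank ≤ m) :
    schattenNorm N q B ≤ (m : ℝ) ^ (1 / q.toReal - 1 / p.toReal) * schattenNorm N p B := by
  rw [schattenNorm_eq_lpQuasinorm, schattenNorm_eq_lpQuasinorm]
  refine lpQuasinorm_le_card_rpow_mul hq hqp (fun _ => LinearMap.singularValues_nonneg _ _)
    (le_trans ?_ hm)
  rw [rank_eq_finrank_range_toLin B (EuclideanSpace.basisFun _ ℝ).toBasis
    (EuclideanSpace.basisFun _ ℝ).toBasis, ← LinearMap.card_support_singularValues]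
  exact card_le_card_of_injOn Fin.val (fun i hi => Finsupp.mem_support_iff.2 (mem_filter.1 hi).2)
    Fin.val_injective.injOn

end Schatten

theorem approxNumber_le {N n : ℕ} {p q : ℝ≥0∞}
    (T : Matrix (Fin N) (Fin N) ℝ →ₗ[ℝ] Matrix (Fin N) (Fin N) ℝ)
    (hT : finrank ℝ (LinearMap.range T) < n) {c : ℝ} (hc : 0 ≤ c)
    (h : ∀ A, schattenNorm N p A ≤ 1 → schattenNorm N q (A - T A) ≤ c) :
    approxNumber N p q n ≤ c := by
  refine csInf_le_of_le ⟨0, ?_⟩ ⟨T, hT, rfl⟩ (Real.sSup_le (fun _ ⟨A, hA, hs⟩ => hs ▸ h A hA) hc)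
  rintro _ ⟨T', -, rfl⟩
  refine Real.sSup_nonneg ?_
  rintro _ ⟨A, -, rfl⟩
  exact schattenNorm_nonneg q _

theorem approxNumber_le_card_compl_rpow {N n : ℕ} {p q : ℝ≥0∞} (hq : 0 < q) (hqp : q ≤ p)
    (S : Finset (Fin N)) (hS : N * #S < n) :
    approxNumber N p q n ≤ (#Sᶜ : ℝ) ^ (1 / q.toReal - 1 / p.toReal) := by
  have hrank : (diagonal fun j => if j ∈ S then (0 : ℝ) else 1).rank = #Sᶜ := by
    rw [rank_diagonal, Fintype.card_subtype]
    congr 1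
    ext j
    simp
  refine approxNumber_le _ ((finrank_range_mulRightLinearMap_diagonal_le S).trans_lt
    (by rwa [Fintype.card_fin])) (by positivity) fun A hA => ?_
  have hsub : A - A * diagonal (fun j => if j ∈ S then 1 else 0)
      = A * diagonal fun j => if j ∈ S then 0 else 1 := by
    ext i j
    by_cases hj : j ∈ S <;> simp [mul_diagonal, hj]
  rw [mulRightLinearMap_apply, hsub]
  calc _ ≤ (#Sᶜ : ℝ) ^ (1 / q.toReal - 1 / p.toReal) * schattenNorm N p (A * _) :=
        schattenNorm_le_rpow_mul_of_rank_le hq hqp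
          ((rank_mul_le_right _ _).trans hrank.le)
    _ ≤ (#Sᶜ : ℝ) ^ (1 / q.toReal - 1 / p.toReal) * schattenNorm N p A := by
        gcongr
        exact schattenNorm_mul_le p A _ (norm_toEuclideanLin_diagonal_apply_le fun j => by
          split_ifs <;> simp)
    _ ≤ (#Sᶜ : ℝ) ^ (1 / q.toReal - 1 / p.toReal) :=
        mul_le_of_le_one_right (by positivity) hA

theorem Nat.sub_one_div_lt_of_le_sq {N n : ℕ} (h1 : 1 ≤ n) (h2 : n ≤ N ^ 2) :
    (n - 1) / N < N := by
  have hN : 0 < N := Nat.pos_of_ne_zero fun h => by simp [h] at h2; omega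
  exact (Nat.div_lt_iff_lt_mul hN).2 (by rw [← sq]; omega)

theorem Nat.sq_sub_add_sub_one_div_eq {N n : ℕ} (h1 : 1 ≤ n) (h2 : n ≤ N ^ 2) :
    (N ^ 2 - n + 1 + N - 1) / N = N - (n - 1) / N := by
  have hk := Nat.sub_one_div_lt_of_le_sq h1 h2
  have hdiv := Nat.div_add_mod (n - 1) N
  have hmod := Nat.mod_lt (n - 1) (Nat.zero_lt_of_lt hk)
  set k := (n - 1) / N
  have hsub : (N - k) * N = N ^ 2 - N * k := by rw [Nat.sub_mul, sq, mul_comm k]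
  have hNk : N * k ≤ N ^ 2 := by rw [sq]; exact Nat.mul_le_mul_left N hk.le
  apply Nat.div_eq_of_lt_le
  · rw [hsub]; omega
  · rw [Nat.add_mul, one_mul, hsub]; omega

theorem Nat.cast_add_sub_one_div_le (x N : ℕ) :
    (((x + N - 1) / N : ℕ) : ℝ) ≤ 2 * max 1 ((x : ℝ) / N) :=
  calc (((x + N - 1) / N : ℕ) : ℝ) ≤ ((x + N : ℕ) : ℝ) / N :=
        Nat.cast_div_le.trans (by gcongr; omega)
    _ = (x : ℝ) / N + (N : ℝ) / N := by push_cast; ring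
    _ ≤ 2 * max 1 ((x : ℝ) / N) := by
        linarith [le_max_left 1 ((x : ℝ) / N), le_max_right 1 ((x : ℝ) / N),
          div_self_le_one (N : ℝ)]

/-- **Upper bound for approximation numbers by projecting out columns:** for
`0 < q ≤ p ≤ ∞` and `1 ≤ n ≤ N²`,
`a_n(S_p^N ↪ S_q^N) ≤ ⌈(N² - n + 1)/N⌉^(1/q - 1/p)`, and in particular there is a
constant `C = C(p,q) > 0` with
`a_n(S_p^N ↪ S_q^N) ≤ C · max{1, (N² - n + 1)/N}^(1/q - 1/p)`. -/
theorem approxNumber_upper_triangle (p q : ℝ≥0∞) (hq : 0 < q) (hqp : q ≤ p) :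
    (∀ N n : ℕ, 1 ≤ n → n ≤ N ^ 2 →
      approxNumber N p q n
        ≤ ((((N ^ 2 - n + 1) + N - 1) / N : ℕ) : ℝ) ^ (1 / q.toReal - 1 / p.toReal)) ∧
    ∃ C : ℝ, 0 < C ∧ ∀ N n : ℕ, 1 ≤ n → n ≤ N ^ 2 →
      approxNumber N p q n
        ≤ C * max 1 (((N ^ 2 - n + 1 : ℕ) : ℝ) / N) ^ (1 / q.toReal - 1 / p.toReal) := by
  have he : 0 ≤ 1 / q.toReal - 1 / p.toReal :=
    sub_nonneg.2 (ENNReal.one_div_toReal_le_one_div_toReal hq hqp)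
  have hceil : ∀ N n : ℕ, 1 ≤ n → n ≤ N ^ 2 → approxNumber N p q n
      ≤ ((((N ^ 2 - n + 1) + N - 1) / N : ℕ) : ℝ) ^ (1 / q.toReal - 1 / p.toReal) := by
    intro N n h1 h2
    -- the approximant keeps the first `⌊(n - 1) / N⌋` columns
    let S : Finset (Fin N) := Iio ⟨(n - 1) / N, Nat.sub_one_div_lt_of_le_sq h1 h2⟩
    have hS : N * #S < n := by
      rw [Fin.card_Iio]
      exact (Nat.mul_div_le (n - 1) N).trans_lt (by omega)
    have := approxNumber_le_card_compl_rpow hq hqp S hS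
    rwa [card_compl, Fin.card_Iio, Fintype.card_fin, ← Nat.sq_sub_add_sub_one_div_eq h1 h2] at this
  refine ⟨hceil, 2 ^ (1 / q.toReal - 1 / p.toReal), by positivity,
    fun N n h1 h2 => (hceil N n h1 h2).trans ?_⟩
  rw [← Real.mul_rpow zero_le_two (zero_le_one.trans (le_max_left _ _))]
  exact Real.rpow_le_rpow (Nat.cast_nonneg _) (Nat.cast_add_sub_one_div_le _ _) he
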